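/- Let U ∈ SU(2) and R ∈ SO(3) satisfy U σ_j U* = Σ_{k=1}^{3} (R⁻¹)_{jk} σ_k for j = 1,2,3. Then for every complex polynomial p in three real variables and every N ∈ ℕ, U^{⊗N} Q_{1/N}(p) (U*)^{⊗N} = Q_{1/N}(p ∘ R⁻¹), where (p ∘ R⁻¹)(x) = p(R⁻¹x). -/

import Mathlib

open scoped ComplexConjugate
open MeasureTheory Filter Topology

noncomputable section

/-! ## Setting

`M₂(ℂ)^{⊗N}` is realized as matrices indexed by `Fin N → Fin 2`, acting on
`(ℂ²)^{⊗N} = EuclideanSpace ℂ (Fin N → Fin 2)`. -/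

/-- `M₂(ℂ)^{⊗N}`, realized as matrices indexed by `Fin N → Fin 2`. -/
abbrev TP (N : ℕ) : Type := Matrix (Fin N → Fin 2) (Fin N → Fin 2) ℂ

/-- The Pauli matrices `σ₁, σ₂, σ₃`. -/
def pauli : Fin 3 → Matrix (Fin 2) (Fin 2) ℂ
  | 0 => !![0, 1; 1, 0]
  | 1 => !![0, -Complex.I; Complex.I, 0]
  | 2 => !![1, 0; 0, -1]

/-- The symmetrization operator `S_N` on `M₂(ℂ)^{⊗N}`: the average over all permutations
of the tensor factors. -/
def symmMat (N : ℕ) (A : TP N) : TP N :=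
  (N.factorial : ℂ)⁻¹ • ∑ σ : Equiv.Perm (Fin N), Matrix.of fun i j => A (i ∘ σ) (j ∘ σ)

/-- `b ⊗ I₂^{⊗(N−M)}` (junk value `0` if `M > N`). -/
def embedMat (M N : ℕ) (b : TP M) : TP N :=
  if h : M ≤ N then
    Matrix.of fun i j =>
      b (fun k => i (Fin.castLE h k)) (fun k => j (Fin.castLE h k)) *
        ∏ k ∈ Finset.univ.filter (fun k : Fin N => M ≤ (k : ℕ)),
          (if i k = j k then (1 : ℂ) else 0)
  else 0

/-- `S_{M,N}(b) = S_N(b ⊗ I₂^{⊗(N−M)})`. -/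
def SMN (M N : ℕ) (b : TP M) : TP N := symmMat N (embedMat M N b)

/-- The elementary tensor `σ_{m 0} ⊗ ⋯ ⊗ σ_{m (L-1)}` as a matrix on `(ℂ²)^{⊗L}`. -/
def pauliTensor {L : ℕ} (m : Fin L → Fin 3) : TP L :=
  Matrix.of fun i j => ∏ k, pauli (m k) (i k) (j k)

/-- For a monomial with exponents `d`, the list of its variable indices (first `d 0` copies
of `0`, then `d 1` copies of `1`, then `d 2` copies of `2`). -/
def monFun (d : Fin 3 →₀ ℕ) : Fin (d 0 + d 1 + d 2) → Fin 3 := fun k =>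
  if (k : ℕ) < d 0 then 0 else if (k : ℕ) < d 0 + d 1 then 1 else 2

/-- Quantization of the monomial `x^{d 0} y^{d 1} z^{d 2}`:
`S_{L,N}(σ_{j₁} ⊗ ⋯ ⊗ σ_{j_L})` if `L ≤ N`, and `0` if `L > N`. -/
def Qmon (N : ℕ) (d : Fin 3 →₀ ℕ) : TP N :=
  SMN (d 0 + d 1 + d 2) N (pauliTensor (monFun d))

/-- The quantization map `Q_{1/N}`: the linear extension of `Qmon` to all complex
polynomials in the three real variables `x, y, z`. -/
def Q (N : ℕ) (p : MvPolynomial (Fin 3) ℂ) : TP N :=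
  ∑ d ∈ p.support, p.coeff d • Qmon N d

/-- The symmetric subspace `Sym^N(ℂ²) ⊆ (ℂ²)^{⊗N}` (the fixed points of the permutation
action, i.e. the range of the vector symmetrizer). -/
def SymSub (N : ℕ) : Submodule ℂ (EuclideanSpace ℂ (Fin N → Fin 2)) where
  carrier := {v | ∀ σ : Equiv.Perm (Fin N), ∀ i, v (i ∘ σ) = v i}
  add_mem' := by
    intro a b ha hb σ i
    have : (a + b) (i ∘ σ) = a (i ∘ σ) + b (i ∘ σ) := rfl
    rw [this, ha σ i, hb σ i]; rfl
  zero_mem' := by intro σ i; rfl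
  smul_mem' := by
    intro c v hv σ i
    have : (c • v) (i ∘ σ) = c • (v (i ∘ σ)) := rfl
    rw [this, hv σ i]; rfl

/-- The vector symmetrizer. -/
def symVec (N : ℕ) (v : EuclideanSpace ℂ (Fin N → Fin 2)) :
    EuclideanSpace ℂ (Fin N → Fin 2) :=
  WithLp.toLp 2 (fun i => (N.factorial : ℂ)⁻¹ * ∑ σ : Equiv.Perm (Fin N), v (i ∘ σ))

lemma symVec_mem (N : ℕ) (v : EuclideanSpace ℂ (Fin N → Fin 2)) :
    symVec N v ∈ SymSub N := by
  intro τ i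
  show (N.factorial : ℂ)⁻¹ * ∑ σ : Equiv.Perm (Fin N), v ((i ∘ τ) ∘ σ)
      = (N.factorial : ℂ)⁻¹ * ∑ σ : Equiv.Perm (Fin N), v (i ∘ σ)
  congr 1
  exact Fintype.sum_equiv (Equiv.mulLeft τ) _ _ (fun σ => by rfl)

/-- The vector symmetrizer as a linear map onto the symmetric subspace. -/
def symProj (N : ℕ) : EuclideanSpace ℂ (Fin N → Fin 2) →ₗ[ℂ] SymSub N where
  toFun v := ⟨symVec N v, symVec_mem N v⟩
  map_add' v w := by
    apply Subtype.ext
    refine PiLp.ext ?_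
    intro i
    show (N.factorial : ℂ)⁻¹ * ∑ σ : Equiv.Perm (Fin N), (v + w) (i ∘ σ) = _
    have h : ∀ σ : Equiv.Perm (Fin N), (v + w) (i ∘ σ) = v (i ∘ σ) + w (i ∘ σ) :=
      fun _ => rfl
    simp only [h, Finset.sum_add_distrib]
    show _ = (N.factorial : ℂ)⁻¹ * (∑ σ : Equiv.Perm (Fin N), v (i ∘ σ))
        + (N.factorial : ℂ)⁻¹ * (∑ σ : Equiv.Perm (Fin N), w (i ∘ σ))
    ring
  map_smul' c v := by
    apply Subtype.ext
    refine PiLp.ext ?_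
    intro i
    show (N.factorial : ℂ)⁻¹ * ∑ σ : Equiv.Perm (Fin N), (c • v) (i ∘ σ) = _
    have h : ∀ σ : Equiv.Perm (Fin N), (c • v) (i ∘ σ) = c * v (i ∘ σ) := fun _ => rfl
    simp only [h, ← Finset.mul_sum]
    show _ = c * ((N.factorial : ℂ)⁻¹ * (∑ σ : Equiv.Perm (Fin N), v (i ∘ σ)))
    ring

/-- The restriction (compression) of a matrix `A` on `(ℂ²)^{⊗N}` to the symmetric subspace
`Sym^N(ℂ²)`, as a continuous linear operator; when `A` leaves `Sym^N(ℂ²)` invariant (as do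
all operators considered here) this is exactly the restriction `A|_{Sym^N(ℂ²)}`. -/
def restrSym (N : ℕ) (A : TP N) : SymSub N →L[ℂ] SymSub N :=
  LinearMap.toContinuousLinearMap
    ((symProj N) ∘ₗ (Matrix.toEuclideanLin A) ∘ₗ (SymSub N).subtype)

/-- The unit sphere `S² ⊂ ℝ³`. -/
abbrev S2 : Type := Metric.sphere (0 : EuclideanSpace ℝ (Fin 3)) 1

/-- Spherical coordinates `(θ, φ) ↦ (sin θ cos φ, sin θ sin φ, cos θ)`. -/
def sphCoord (a : ℝ × ℝ) : EuclideanSpace ℝ (Fin 3) :=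
  WithLp.toLp 2 ![Real.sin a.1 * Real.cos a.2, Real.sin a.1 * Real.sin a.2, Real.cos a.1]

lemma sphCoord_mem (a : ℝ × ℝ) :
    sphCoord a ∈ Metric.sphere (0 : EuclideanSpace ℝ (Fin 3)) 1 := by
  have h : ‖sphCoord a‖ = 1 := by
    rw [EuclideanSpace.norm_eq]
    have : ∑ i : Fin 3, sphCoord a i ^ 2 = 1 := by
      have hs := Real.sin_sq_add_cos_sq a.1
      have hc := Real.sin_sq_add_cos_sq a.2
      simp [sphCoord, Fin.sum_univ_three]
      nlinarith [hs, hc]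
    have h2 : ∀ i : Fin 3, ‖sphCoord a i‖ ^ 2 = sphCoord a i ^ 2 := fun i => sq_abs _
    simp only [h2, this]
    exact Real.sqrt_one
  simpa [mem_sphere_iff_norm] using h

/-- The standard surface measure `dΩ` on `S²` (of total mass `4π`), realized as the
push-forward of `sin θ dθ dφ` on `[0,π] × (−π,π]` under spherical coordinates. -/
def μS2 : Measure S2 :=
  Measure.map (fun a : ℝ × ℝ => (⟨sphCoord a, sphCoord_mem a⟩ : S2))
    (((volume : Measure (ℝ × ℝ)).restrict
        (Set.Icc (0 : ℝ) Real.pi ×ˢ Set.Ioc (-Real.pi) Real.pi)).withDensity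
      fun a => ENNReal.ofReal (Real.sin a.1))

/-- The polar angle `θ ∈ [0, π]` of a point of `S²`. -/
def thetaOf (Ω : S2) : ℝ := Real.arccos ((Ω : EuclideanSpace ℝ (Fin 3)) 2)

/-- The azimuthal angle `φ ∈ (−π, π]` of a point of `S²`. -/
def phiOf (Ω : S2) : ℝ :=
  Complex.arg (((Ω : EuclideanSpace ℝ (Fin 3)) 0 : ℂ) +
    ((Ω : EuclideanSpace ℝ (Fin 3)) 1 : ℂ) * Complex.I)

/-- The coherent spin state `|Ω⟩₁ = cos(θ/2) e₁ + e^{iφ} sin(θ/2) e₂ ∈ ℂ²`. -/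
def cs1 (Ω : S2) : Fin 2 → ℂ :=
  ![(Real.cos (thetaOf Ω / 2) : ℂ),
    Complex.exp (Complex.I * (phiOf Ω : ℂ)) * (Real.sin (thetaOf Ω / 2) : ℂ)]

/-- The `N`-fold coherent spin state `|Ω⟩_N = |Ω⟩₁^{⊗N} ∈ (ℂ²)^{⊗N}`. -/
def csN (N : ℕ) (Ω : S2) : EuclideanSpace ℂ (Fin N → Fin 2) :=
  WithLp.toLp 2 (fun i => ∏ k, cs1 Ω (i k))

/-- The matrix of the weak integral `((N+1)/(4π)) ∫_{S²} f(Ω) |Ω⟩⟨Ω|_N dΩ` on `(ℂ²)^{⊗N}`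
(entrywise Bochner integral, which in finite dimension coincides with the weak integral). -/
def Q'mat (N : ℕ) (f : S2 → ℂ) : TP N :=
  Matrix.of fun i j =>
    ((N + 1 : ℂ) / (4 * (Real.pi : ℂ))) * ∫ Ω, f Ω * csN N Ω i * conj (csN N Ω j) ∂μS2

/-- The coherent-state (Berezin) quantization map `Q'_{1/N}`, as an operator on
`Sym^N(ℂ²)` (the range of `|Ω⟩⟨Ω|_N` lies in `Sym^N(ℂ²)`, so the compression coincides
with the operator defined by the weak integral). -/
def Q' (N : ℕ) (f : S2 → ℂ) : SymSub N →L[ℂ] SymSub N := restrSym N (Q'mat N f)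

/-- The restriction of a polynomial (in three real variables) to the unit sphere `S²`. -/
def restrictS2 (p : MvPolynomial (Fin 3) ℂ) : S2 → ℂ :=
  fun Ω => MvPolynomial.eval (fun i => ((Ω : EuclideanSpace ℝ (Fin 3)) i : ℂ)) p

/-- The restriction to `S²` as a linear map. -/
def restrictS2Lin : MvPolynomial (Fin 3) ℂ →ₗ[ℂ] (S2 → ℂ) where
  toFun := restrictS2
  map_add' p q := by funext Ω; simp [restrictS2]
  map_smul' c p := by funext Ω; simp [restrictS2]

/-- `P_N(S²)`: the space of restrictions to `S²` of complex polynomials of degree `≤ N`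
in three real variables. -/
def PNS2 (N : ℕ) : Submodule ℂ (S2 → ℂ) where
  carrier := {g | ∃ p : MvPolynomial (Fin 3) ℂ, p.totalDegree ≤ N ∧ g = restrictS2 p}
  add_mem' := by
    rintro a b ⟨p, hp, rfl⟩ ⟨q, hq, rfl⟩
    exact ⟨p + q, le_trans (MvPolynomial.totalDegree_add p q) (by omega),
      by funext Ω; simp [restrictS2]⟩
  zero_mem' := ⟨0, by simp, by funext Ω; simp [restrictS2]⟩
  smul_mem' := by
    rintro c a ⟨p, hp, rfl⟩
    exact ⟨c • p, le_trans (MvPolynomial.totalDegree_smul_le c p) hp,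
      by funext Ω; simp [restrictS2]⟩

/-- The `N`-fold tensor power `U^{⊗N}` of a `2×2` matrix, on `(ℂ²)^{⊗N}`. -/
def tpow (N : ℕ) (U : Matrix (Fin 2) (Fin 2) ℂ) : TP N :=
  Matrix.of fun i j => ∏ k, U (i k) (j k)

/-- `σ_k(j) = I₂ ⊗ ⋯ ⊗ σ_k ⊗ ⋯ ⊗ I₂` with the Pauli matrix `σ_k` in the `j`-th slot. -/
def pauliAt (N : ℕ) (k : Fin 3) (j : Fin N) : TP N :=
  Matrix.of fun a b =>
    pauli k (a j) (b j) *
      ∏ t ∈ Finset.univ.filter (fun t : Fin N => t ≠ j), (if a t = b t then (1 : ℂ) else 0)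

/-- The quantum Curie–Weiss Hamiltonian
`h^{CW}_{1/N} = (1/N)( −(J/(2N)) Σ_{i,j} σ₃(i)σ₃(j) − B Σ_j σ₁(j))`. -/
def hCW (J B : ℝ) (N : ℕ) : TP N :=
  ((N : ℂ))⁻¹ • ((-(J / (2 * N)) : ℂ) • ∑ i : Fin N, ∑ j : Fin N,
      pauliAt N 2 i * pauliAt N 2 j
    + (-(B : ℂ)) • ∑ j : Fin N, pauliAt N 0 j)

open scoped Classical in
/-- The action of a (special orthogonal) matrix on the unit sphere `S²`
(junk value if the image does not lie on the sphere). -/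
def rotAct (R : Matrix (Fin 3) (Fin 3) ℝ) (Ω : S2) : S2 :=
  if h : (WithLp.toLp 2 (R.mulVec (Ω : EuclideanSpace ℝ (Fin 3))) : EuclideanSpace ℝ (Fin 3)) ∈
      Metric.sphere (0 : EuclideanSpace ℝ (Fin 3)) 1
  then ⟨WithLp.toLp 2 (R.mulVec (Ω : EuclideanSpace ℝ (Fin 3))), h⟩ else Ω

/-- A polynomial in three variables is harmonic if its Laplacian vanishes. -/
def IsHarmonic (p : MvPolynomial (Fin 3) ℂ) : Prop :=
  ∑ i : Fin 3, MvPolynomial.pderiv i (MvPolynomial.pderiv i p) = 0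

/-- The polynomial `x² + y² + z² − 1`. -/
def sphPoly : MvPolynomial (Fin 3) ℂ :=
  MvPolynomial.X 0 ^ 2 + MvPolynomial.X 1 ^ 2 + MvPolynomial.X 2 ^ 2 - 1

/-- The Dicke state `|k, N−k⟩ ∈ Sym^N(ℂ²)`: `binom(N,k)^{-1/2}` times the sum of all
elementary tensors with exactly `k` factors `e₂` (and `N−k` factors `e₁`). -/
def dicke (N k : ℕ) : EuclideanSpace ℂ (Fin N → Fin 2) :=
  WithLp.toLp 2 (fun i => if (Finset.univ.filter fun t => i t = 1).card = k
    then ((Real.sqrt (N.choose k) : ℂ))⁻¹ else 0)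

/-- The operator norm of a matrix acting on `(ℂ²)^{⊗N}` with its Euclidean (ℓ²) norm. -/
def matOpNorm {N : ℕ} (A : TP N) : ℝ :=
  ‖LinearMap.toContinuousLinearMap (Matrix.toEuclideanLin A)‖

/-!
Conjugation by `U^{⊗N}` acts factor by factor on an elementary tensor and commutes with
permuting the factors, hence with `S_N`; on the identity factors of `b ⊗ I₂^{⊗(N-M)}` it acts
trivially because `U U* = 1`. So it sends `S_{L,N}(σ_{j₁} ⊗ ⋯ ⊗ σ_{j_L})` to
`S_{L,N}(⊗_t Σ_k (R⁻¹)_{j_t k} σ_k)`, and expanding multilinearly gives a sum over Pauli words.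
Since `S_{L,N}` of a Pauli word only depends on the word up to reordering, that is on the
monomial `∏_t x_{j_t}`, this sum is the quantization of `∏_t Σ_k (R⁻¹)_{j_t k} x_k`, the
monomial `∏_t x_{j_t}` composed with `R⁻¹`. Both sides are linear in `p`.
-/

open Finset MvPolynomial

section PiKronecker

variable {ι κ n R : Type*} [Fintype ι] [CommSemiring R]

def piKronecker (A : ι → Matrix n n R) : Matrix (ι → n) (ι → n) R :=
  Matrix.of fun i j => ∏ k, A k (i k) (j k)

theorem piKronecker_mul [DecidableEq ι] [Fintype n] (A B : ι → Matrix n n R) :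
    piKronecker A * piKronecker B = piKronecker fun k => A k * B k := by
  ext i j
  simp only [piKronecker, Matrix.mul_apply, Matrix.of_apply, Finset.prod_univ_sum,
    Fintype.piFinset_univ, Finset.prod_mul_distrib]

theorem piKronecker_sum_smul [DecidableEq ι] [Fintype κ] (c : ι → κ → R) (B : κ → Matrix n n R) :
    piKronecker (fun t => ∑ k, c t k • B k)
      = ∑ g : ι → κ, (∏ t, c t (g t)) • piKronecker fun t => B (g t) := by
  ext i j
  simp only [piKronecker, Matrix.of_apply, Matrix.sum_apply, Matrix.smul_apply, smul_eq_mul,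
    Finset.prod_univ_sum, Fintype.piFinset_univ, Finset.prod_mul_distrib]

theorem piKronecker_comp_perm (A : ι → Matrix n n R) (σ : Equiv.Perm ι) :
    piKronecker (A ∘ σ) = (piKronecker A).submatrix (· ∘ σ.symm) (· ∘ σ.symm) := by
  ext i j
  simp only [piKronecker, Matrix.submatrix_apply, Matrix.of_apply, Function.comp_apply]
  rw [← Equiv.prod_comp σ fun k => A k (i (σ.symm k)) (j (σ.symm k))]
  simp only [Equiv.symm_apply_apply]

theorem piKronecker_const_submatrix (V : Matrix n n R) (σ : Equiv.Perm ι) :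
    (piKronecker fun _ : ι => V).submatrix (· ∘ σ) (· ∘ σ) = piKronecker fun _ => V :=
  (piKronecker_comp_perm (fun _ : ι => V) σ.symm).symm

theorem piKronecker_const_mul_submatrix_mul [DecidableEq ι] [Fintype n] (V W : Matrix n n R)
    (A : Matrix (ι → n) (ι → n) R) (σ : Equiv.Perm ι) :
    (piKronecker fun _ : ι => V) * A.submatrix (· ∘ σ) (· ∘ σ) * piKronecker (fun _ : ι => W)
      = ((piKronecker fun _ : ι => V) * A * piKronecker fun _ : ι => W).submatrix
          (· ∘ σ) (· ∘ σ) := by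
  let e : (ι → n) ≃ (ι → n) := σ.symm.arrowCongr (Equiv.refl n)
  conv_lhs => rw [← piKronecker_const_submatrix V σ, ← piKronecker_const_submatrix W σ]
  change (piKronecker fun _ => V).submatrix e e * A.submatrix e e
      * (piKronecker fun _ => W).submatrix e e = _
  simp only [Matrix.submatrix_mul_equiv]
  rfl

end PiKronecker

def extendOne {α : Type*} [One α] {M : ℕ} (N : ℕ) (A : Fin M → α) (k : Fin N) : α :=
  if hk : (k : ℕ) < M then A ⟨k, hk⟩ else 1

theorem extendOne_comp_perm {α : Type*} [One α] {M N : ℕ} (h : M ≤ N) (A : Fin M → α)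
    (τ : Equiv.Perm (Fin M)) :
    extendOne N (A ∘ τ) = extendOne N A ∘ τ.extendDomain (Fin.castLEquiv h) := by
  funext k
  by_cases hk : (k : ℕ) < M
  · simp [extendOne, hk, Equiv.Perm.extendDomain_apply_subtype τ (Fin.castLEquiv h) hk]
  · simp [extendOne, hk, Equiv.Perm.extendDomain_apply_not_subtype τ (Fin.castLEquiv h) hk]

theorem mul_extendOne_mul {α : Type*} [Monoid α] {M N : ℕ} (A : Fin M → α)
    {V W : α} (hVW : V * W = 1) (k : Fin N) :
    V * extendOne N A k * W = extendOne N (fun t => V * A t * W) k := by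
  by_cases hk : (k : ℕ) < M
  · simp [extendOne, hk]
  · simp [extendOne, hk, hVW]

section Symmetrization

variable {N M : ℕ}

theorem symmMat_submatrix_perm (A : TP N) (σ : Equiv.Perm (Fin N)) :
    symmMat N (A.submatrix (· ∘ σ) (· ∘ σ)) = symmMat N A := by
  unfold symmMat
  congr 1
  exact Fintype.sum_equiv (Equiv.mulRight σ) _ _ fun τ => rfl

theorem tpow_mul_symmMat_mul_tpow (V W : Matrix (Fin 2) (Fin 2) ℂ) (A : TP N) :
    tpow N V * symmMat N A * tpow N W = symmMat N (tpow N V * A * tpow N W) := by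
  simp only [symmMat, Matrix.mul_smul, Matrix.smul_mul, Matrix.mul_sum, Matrix.sum_mul]
  congr 1
  exact Finset.sum_congr rfl fun σ _ => piKronecker_const_mul_submatrix_mul V W A σ

theorem embedMat_of_not_le (h : ¬ M ≤ N) (b : TP M) : embedMat M N b = 0 := dif_neg h

theorem symmMat_zero : symmMat N 0 = 0 := by
  ext i j
  simp [symmMat]

def SMNLinearMap (M N : ℕ) : TP M →ₗ[ℂ] TP N where
  toFun := SMN M N
  map_add' a b := by
    by_cases h : M ≤ N
    · ext i j
      simp [SMN, symmMat, embedMat, h, Matrix.sum_apply, add_mul, Finset.sum_add_distrib, mul_add]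
    · simp [SMN, embedMat_of_not_le h, symmMat_zero]
  map_smul' c a := by
    by_cases h : M ≤ N
    · ext i j
      simp [SMN, symmMat, embedMat, h, Matrix.sum_apply, Finset.mul_sum, mul_assoc, mul_left_comm]
    · simp [SMN, embedMat_of_not_le h, symmMat_zero]

theorem SMNLinearMap_apply (M N : ℕ) (b : TP M) : SMNLinearMap M N b = SMN M N b := rfl

theorem embedMat_piKronecker (h : M ≤ N) (A : Fin M → Matrix (Fin 2) (Fin 2) ℂ) :
    embedMat M N (piKronecker A) = piKronecker (extendOne N A) := by
  ext i j
  simp only [embedMat, dif_pos h, piKronecker, Matrix.of_apply, extendOne]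
  rw [← Finset.prod_filter_mul_prod_filter_not Finset.univ (fun k : Fin N => (k : ℕ) < M)]
  congr 1
  · rw [Finset.prod_subtype _ (p := fun k : Fin N => (k : ℕ) < M) fun k => by simp]
    exact Fintype.prod_equiv (Fin.castLEquiv h) _ _ fun t => by simp
  · refine Finset.prod_congr (by ext; simp) fun k hk => ?_
    rw [dif_neg (by simpa using hk), Matrix.one_apply]

theorem pauliTensor_eq_piKronecker {L : ℕ} (m : Fin L → Fin 3) :
    pauliTensor m = piKronecker fun t => pauli (m t) := rfl

theorem SMN_piKronecker_comp_perm (A : Fin M → Matrix (Fin 2) (Fin 2) ℂ)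
    (τ : Equiv.Perm (Fin M)) : SMN M N (piKronecker (A ∘ τ)) = SMN M N (piKronecker A) := by
  by_cases h : M ≤ N
  · rw [SMN, SMN, embedMat_piKronecker h, embedMat_piKronecker h, extendOne_comp_perm h,
      piKronecker_comp_perm, symmMat_submatrix_perm]
  · simp only [SMN, embedMat_of_not_le h]

theorem tpow_mul_SMN_piKronecker_mul_tpow {V W : Matrix (Fin 2) (Fin 2) ℂ} (hVW : V * W = 1)
    (A : Fin M → Matrix (Fin 2) (Fin 2) ℂ) :
    tpow N V * SMN M N (piKronecker A) * tpow N W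
      = SMN M N (piKronecker fun t => V * A t * W) := by
  by_cases h : M ≤ N
  · rw [SMN, SMN, tpow_mul_symmMat_mul_tpow, embedMat_piKronecker h, embedMat_piKronecker h]
    change symmMat N ((piKronecker fun _ => V) * _ * piKronecker fun _ => W) = _
    simp only [piKronecker_mul, mul_extendOne_mul A hVW]
  · simp only [SMN, embedMat_of_not_le h, symmMat_zero, Matrix.mul_zero, Matrix.zero_mul]

end Symmetrization

section Words

variable {ι ι' σ : Type*} [Fintype ι] [Fintype ι']

def wordExponent (f : ι → σ) : σ →₀ ℕ := ∑ t, Finsupp.single (f t) 1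

theorem wordExponent_apply [DecidableEq σ] (f : ι → σ) (j : σ) :
    wordExponent f j = #{t | f t = j} := by
  rw [Finset.card_filter]
  simp [wordExponent, Finsupp.finsetSum_apply, Finsupp.single_apply]

theorem prod_X_eq_monomial_wordExponent {R : Type*} [CommSemiring R] (f : ι → σ) :
    ∏ t, (X (f t) : MvPolynomial σ R) = monomial (wordExponent f) 1 := by
  simp [wordExponent, monomial_sum_one, X]

theorem exists_equiv_comp_eq_of_wordExponent_eq {f : ι → σ} {g : ι' → σ}
    (hfg : wordExponent f = wordExponent g) : ∃ e : ι ≃ ι', g ∘ e = f := by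
  classical
  have hcard (j : σ) : Fintype.card {t // f t = j} = Fintype.card {t // g t = j} := by
    simpa only [Fintype.card_subtype, wordExponent_apply] using DFunLike.congr_fun hfg j
  let e (j : σ) : {t // f t = j} ≃ {t // g t = j} := Fintype.equivOfCardEq (hcard j)
  refine ⟨(Equiv.sigmaFiberEquiv f).symm.trans
    ((Equiv.sigmaCongrRight e).trans (Equiv.sigmaFiberEquiv g)), funext fun t => ?_⟩
  exact (e (f t) ⟨t, rfl⟩).2

theorem wordExponent_monFun (d : Fin 3 →₀ ℕ) : wordExponent (monFun d) = d := by
  ext j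
  simp only [wordExponent, Fin.sum_univ_add, monFun]
  fin_cases j <;> simp [add_assoc]

theorem SMN_pauliTensor_eq_of_wordExponent_eq {N L L' : ℕ} {f : Fin L → Fin 3}
    {g : Fin L' → Fin 3} (hfg : wordExponent f = wordExponent g) :
    SMN L N (pauliTensor f) = SMN L' N (pauliTensor g) := by
  obtain ⟨e, rfl⟩ := exists_equiv_comp_eq_of_wordExponent_eq hfg
  obtain rfl : L = L' := by simpa using Fintype.card_congr e
  rw [pauliTensor_eq_piKronecker, pauliTensor_eq_piKronecker]
  exact SMN_piKronecker_comp_perm (pauli ∘ g) e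

end Words

section Quantization

theorem Q_eq_sum_coeff (N : ℕ) (p : MvPolynomial (Fin 3) ℂ) :
    Q N p = (AddMonoidAlgebra.coeff p).sum fun d a => a • Qmon N d := by
  rw [MvPolynomial.sum_def, Q]

def QLinearMap (N : ℕ) : MvPolynomial (Fin 3) ℂ →ₗ[ℂ] TP N where
  toFun := Q N
  map_add' p q := by
    simp only [Q_eq_sum_coeff, AddMonoidAlgebra.coeff_add]
    exact Finsupp.sum_add_index' (fun _ => zero_smul ℂ _) fun _ _ _ => add_smul _ _ _
  map_smul' c p := by
    rw [Q_eq_sum_coeff, Q_eq_sum_coeff, AddMonoidAlgebra.coeff_smul,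
      Finsupp.sum_smul_index' fun d => zero_smul ℂ (Qmon N d), Finsupp.smul_sum]
    simp only [smul_smul, smul_eq_mul, RingHom.id_apply]

theorem QLinearMap_apply (N : ℕ) (p : MvPolynomial (Fin 3) ℂ) : QLinearMap N p = Q N p := rfl

theorem Q_monomial_one (N : ℕ) (d : Fin 3 →₀ ℕ) : Q N (monomial d 1) = Qmon N d := by
  simp [Q, support_monomial]

theorem Q_prod_X (N : ℕ) {L : ℕ} (f : Fin L → Fin 3) :
    Q N (∏ t, X (f t)) = SMN L N (pauliTensor f) := by
  rw [prod_X_eq_monomial_wordExponent, Q_monomial_one, Qmon]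
  exact SMN_pauliTensor_eq_of_wordExponent_eq (wordExponent_monFun _)

theorem monomial_one_eq_prod_X_monFun {R : Type*} [CommSemiring R] (d : Fin 3 →₀ ℕ) :
    (monomial d 1 : MvPolynomial (Fin 3) R) = ∏ t, X (monFun d t) := by
  rw [prod_X_eq_monomial_wordExponent, wordExponent_monFun]

theorem bind₁_prod_X_linear {σ R : Type*} [Fintype σ] [CommSemiring R] {L : ℕ}
    (c : σ → σ → R) (f : Fin L → σ) :
    bind₁ (fun j => ∑ k, C (c j k) * X k) (∏ t, X (f t))
      = ∑ g : Fin L → σ, (∏ t, c (f t) (g t)) • ∏ t, (X (g t) : MvPolynomial σ R) := by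
  rw [map_prod]
  simp only [bind₁_X_right]
  rw [Finset.prod_univ_sum, Fintype.piFinset_univ]
  refine Finset.sum_congr rfl fun g _ => ?_
  rw [Finset.prod_mul_distrib, ← map_prod, C_mul']

end Quantization

section Covariance

variable {N : ℕ} {V W : Matrix (Fin 2) (Fin 2) ℂ} {c : Fin 3 → Fin 3 → ℂ}

theorem tpow_mul_SMN_pauliTensor_mul_tpow {L : ℕ} (hVW : V * W = 1)
    (hc : ∀ j, V * pauli j * W = ∑ k, c j k • pauli k) (f : Fin L → Fin 3) :
    tpow N V * SMN L N (pauliTensor f) * tpow N W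
      = ∑ g : Fin L → Fin 3, (∏ t, c (f t) (g t)) • SMN L N (pauliTensor g) := by
  rw [pauliTensor_eq_piKronecker, tpow_mul_SMN_piKronecker_mul_tpow hVW]
  simp only [hc, piKronecker_sum_smul, ← pauliTensor_eq_piKronecker, ← SMNLinearMap_apply,
    map_sum, map_smul]

theorem tpow_mul_Q_mul_tpow (hVW : V * W = 1)
    (hc : ∀ j, V * pauli j * W = ∑ k, c j k • pauli k) (p : MvPolynomial (Fin 3) ℂ) :
    tpow N V * Q N p * tpow N W = Q N (bind₁ (fun j => ∑ k, C (c j k) * X k) p) := by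
  suffices LinearMap.mulRight ℂ (tpow N W) ∘ₗ LinearMap.mulLeft ℂ (tpow N V) ∘ₗ QLinearMap N
      = QLinearMap N ∘ₗ (bind₁ fun j => ∑ k, C (c j k) * X k).toLinearMap from
    LinearMap.congr_fun this p
  refine linearMap_ext fun d => LinearMap.ext_ring ?_
  simp only [LinearMap.comp_apply, AlgHom.toLinearMap_apply, LinearMap.mulLeft_apply,
    LinearMap.mulRight_apply, monomial_one_eq_prod_X_monFun, bind₁_prod_X_linear, map_sum,
    map_smul, QLinearMap_apply, Q_prod_X, tpow_mul_SMN_pauliTensor_mul_tpow hVW hc]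

end Covariance

/-- covariance of `Q_{1/N}`, Eq. (2.22) of the paper: if `U ∈ SU(2)`
and `R ∈ SO(3)` satisfy `U σ_j U* = Σ_k (R⁻¹)_{jk} σ_k`, then
`U^{⊗N} Q_{1/N}(p) (U*)^{⊗N} = Q_{1/N}(p ∘ R⁻¹)` for every polynomial `p` and every `N`. -/
theorem Q_covariance (U : Matrix.specialUnitaryGroup (Fin 2) ℂ)
    (R : Matrix.specialOrthogonalGroup (Fin 3) ℝ)
    (hUR : ∀ j : Fin 3,
      (U : Matrix (Fin 2) (Fin 2) ℂ) * pauli j * star (U : Matrix (Fin 2) (Fin 2) ℂ) =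
        ∑ k : Fin 3, ((((R : Matrix (Fin 3) (Fin 3) ℝ)⁻¹) j k : ℝ) : ℂ) • pauli k)
    (p : MvPolynomial (Fin 3) ℂ) (N : ℕ) :
    tpow N (U : Matrix (Fin 2) (Fin 2) ℂ) * Q N p *
        tpow N (star (U : Matrix (Fin 2) (Fin 2) ℂ)) =
      Q N (MvPolynomial.bind₁
        (fun j : Fin 3 => ∑ k : Fin 3,
          MvPolynomial.C ((((R : Matrix (Fin 3) (Fin 3) ℝ)⁻¹) j k : ℂ)) *
            MvPolynomial.X k) p) :=
  tpow_mul_Q_mul_tpow (Matrix.mem_unitaryGroup_iff.mp U.2.1) hUR p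

end
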